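/- arXiv:2404.15338 — 5 statements merged into one kernel-verified Lean document; each statement's English description precedes it below -/
import Mathlib

section
/- Let f : ℝ → ℝ be twice continuously differentiable, and let r ∈ ℝ with f(r) = 0 and f'(r) ≠ 0. Then the Newton map N(x) = x - f(x)/f'(x) satisfies lim_{x → r, x ≠ r} (N(x) - r)/(x - r)² = f''(r)/(2·f'(r)). -/
/-- Newton map `N(x) = x - f(x)/f'(x)`. -/
noncomputable def newtonMap (f : ℝ → ℝ) (x : ℝ) : ℝ := x - f x / deriv f x

/-!
Since `N x - r = ((x - r) f'(x) - f(x)) / f'(x)` and `f'(x) → f'(r) ≠ 0`, it suffices that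
`((x - r) f'(x) - (f(x) - f(r))) / (x - r)² → f''(r)/2`. The numerator vanishes at `r` and has
derivative `(x - r) f''(x)`, so this is one application of L'Hôpital's rule.
-/

open Filter Topology

/-- `f r - (f x + f'(x) (r - x))` is the error at `r` of the tangent line to `f` at `x`. -/
theorem tendsto_tangent_error_div_sq {f : ℝ → ℝ} {r : ℝ}
    (hf : ∀ᶠ x in 𝓝 r, DifferentiableAt ℝ f x)
    (hf' : ∀ᶠ x in 𝓝 r, DifferentiableAt ℝ (deriv f) x)
    (hf'' : ContinuousAt (deriv (deriv f)) r) :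
    Tendsto (fun x => ((x - r) * deriv f x - (f x - f r)) / (x - r) ^ 2) (𝓝[≠] r)
      (𝓝 (deriv (deriv f) r / 2)) := by
  have hnum : ∀ᶠ x in 𝓝 r, HasDerivAt (fun x => (x - r) * deriv f x - (f x - f r))
      ((x - r) * deriv (deriv f) x) x := by
    filter_upwards [hf, hf'] with x hfx hf'x
    refine (((hasDerivAt_id' x).sub_const r).fun_mul hf'x.hasDerivAt).fun_sub
      (hfx.hasDerivAt.sub_const (f r)) |>.congr_deriv ?_
    ring
  have hden (x : ℝ) : HasDerivAt (fun x => (x - r) ^ 2) (2 * (x - r)) x := by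
    simpa using ((hasDerivAt_id x).sub_const r).fun_pow 2
  refine HasDerivAt.lhopital_zero_nhdsNE (nhdsWithin_le_nhds hnum)
    (Eventually.of_forall hden) ?_ ?_ ?_ ?_
  · filter_upwards [self_mem_nhdsWithin] with x hx
    exact mul_ne_zero two_ne_zero (sub_ne_zero.mpr hx)
  · simpa using hnum.self_of_nhds.continuousAt.tendsto.mono_left nhdsWithin_le_nhds
  · simpa using (hden r).continuousAt.tendsto.mono_left nhdsWithin_le_nhds
  · refine (hf''.tendsto.div_const 2).mono_left nhdsWithin_le_nhds |>.congr' ?_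
    filter_upwards [self_mem_nhdsWithin] with x hx
    field_simp [sub_ne_zero.mpr hx]

theorem newtonMap_sub_eq {f : ℝ → ℝ} {x : ℝ} (r : ℝ) (hx : deriv f x ≠ 0) :
    newtonMap f x - r = ((x - r) * deriv f x - f x) / deriv f x := by
  rw [newtonMap]
  field_simp
  ring

/-- quadratic convergence of the Newton map near a simple root:
`(N(x) - r)/(x - r)² → f''(r)/(2 f'(r))` as `x → r`, `x ≠ r`. -/
theorem newton_quadratic_limit (f : ℝ → ℝ) (hf : ContDiff ℝ 2 f)
    (r : ℝ) (hr : f r = 0) (hr' : deriv f r ≠ 0) :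
    Filter.Tendsto (fun x => (newtonMap f x - r) / (x - r) ^ 2)
      (nhdsWithin r {r}ᶜ)
      (nhds (deriv (deriv f) r / (2 * deriv f r))) := by
  obtain ⟨hf_diff, -, hf'⟩ := contDiff_succ_iff_deriv.mp (show ContDiff ℝ (1 + 1) f from hf)
  obtain ⟨hf'_diff, hf''_cont⟩ := contDiff_one_iff_deriv.mp hf'
  have htangent := tendsto_tangent_error_div_sq (r := r) (.of_forall hf_diff)
    (.of_forall hf'_diff) hf''_cont.continuousAt
  have hf'_cont : ContinuousAt (deriv f) r := hf'_diff.continuous.continuousAt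
  have hlim := htangent.div (hf'_cont.tendsto.mono_left nhdsWithin_le_nhds) hr'
  rw [div_div] at hlim
  refine hlim.congr' ?_
  filter_upwards [nhdsWithin_le_nhds (hf'_cont.eventually_ne hr')] with x hx
  rw [Pi.div_apply, hr, sub_zero, newtonMap_sub_eq r hx, div_right_comm]
end

section
/- Let f : ℝ → ℝ be twice continuously differentiable, let r ∈ ℝ with f(r) = 0 and f'(r) ≠ 0, and let β ∈ ℝ. Then the extended Newton-Raphson map satisfies lim_{x → r, x ≠ r} (G_β(x) - r)/(x - r)² = (1 - β)·f''(r)/(2·f'(r)). -/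
open Filter Asymptotics Topology

/-- Extended Newton-Raphson map `G_β(x) = N(x) - β·f(N(x))/f'(x)`. -/
noncomputable def extNewtonMap (f : ℝ → ℝ) (β x : ℝ) : ℝ :=
  newtonMap f x - β * f (newtonMap f x) / deriv f x

theorem tendsto_sub_sq_nhdsNE (r : ℝ) :
    Tendsto (fun x : ℝ => (x - r) ^ 2) (𝓝[≠] r) (𝓝 0) := by
  apply tendsto_nhdsWithin_of_tendsto_nhds
  simpa using (by fun_prop : Continuous fun x : ℝ => (x - r) ^ 2).tendsto r

theorem eventually_sub_sq_ne_zero_nhdsNE (r : ℝ) : ∀ᶠ x in 𝓝[≠] r, (x - r) ^ 2 ≠ 0 := by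
  filter_upwards [self_mem_nhdsWithin] with x hx
  exact pow_ne_zero 2 (sub_ne_zero.mpr hx)

theorem tendsto_deriv_mul_sub_sub_div_sq {f : ℝ → ℝ} {r : ℝ} (hf : Differentiable ℝ f)
    (hf' : Differentiable ℝ (deriv f)) (hf'' : ContinuousAt (deriv (deriv f)) r) :
    Tendsto (fun x => (deriv f x * (x - r) - (f x - f r)) / (x - r) ^ 2) (𝓝[≠] r)
      (𝓝 (deriv (deriv f) r / 2)) := by
  apply HasDerivAt.lhopital_zero_nhdsNE
    (f' := fun x => deriv (deriv f) x * (x - r)) (g' := fun x => 2 * (x - r))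
  · filter_upwards with x
    exact (((hf' x).hasDerivAt.mul ((hasDerivAt_id x).sub_const r)).sub
      ((hf x).hasDerivAt.sub_const (f r))).congr_deriv (by simp)
  · filter_upwards with x
    exact (((hasDerivAt_id x).sub_const r).pow 2).congr_deriv (by simp)
  · filter_upwards [self_mem_nhdsWithin] with x hx
    exact mul_ne_zero two_ne_zero (sub_ne_zero.mpr hx)
  · apply tendsto_nhdsWithin_of_tendsto_nhds
    have hcont : Continuous fun x => deriv f x * (x - r) - (f x - f r) := by
      have := hf.continuous; have := hf'.continuous; fun_prop
    simpa using hcont.tendsto r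
  · exact tendsto_sub_sq_nhdsNE r
  · refine (tendsto_nhdsWithin_of_tendsto_nhds (hf''.div_const 2)).congr' ?_
    filter_upwards [self_mem_nhdsWithin] with x hx
    field_simp [sub_ne_zero.mpr hx]

theorem tendsto_newtonMap_sub_div_sq {f : ℝ → ℝ} {r : ℝ} (hf : Differentiable ℝ f)
    (hf' : Differentiable ℝ (deriv f)) (hf'' : ContinuousAt (deriv (deriv f)) r)
    (hr : f r = 0) (hr' : deriv f r ≠ 0) :
    Tendsto (fun x => (newtonMap f x - r) / (x - r) ^ 2) (𝓝[≠] r)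
      (𝓝 (deriv (deriv f) r / (2 * deriv f r))) := by
  have hderiv : Tendsto (deriv f) (𝓝[≠] r) (𝓝 (deriv f r)) :=
    tendsto_nhdsWithin_of_tendsto_nhds (hf'.continuous.tendsto r)
  rw [div_mul_eq_div_div]
  refine ((tendsto_deriv_mul_sub_sub_div_sq hf hf' hf'').div hderiv hr').congr' ?_
  filter_upwards [hderiv.eventually_ne hr'] with x hx
  simp only [Pi.div_apply, newtonMap, hr]
  field_simp
  ring

theorem HasDerivAt.tendsto_comp_sub_div {α : Type*} {l : Filter α} {g : ℝ → ℝ} {g' r c : ℝ}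
    {u v : α → ℝ} (hg : HasDerivAt g g' r) (hv : Tendsto v l (𝓝 0)) (hv0 : ∀ᶠ x in l, v x ≠ 0)
    (huv : Tendsto (fun x => (u x - r) / v x) l (𝓝 c)) :
    Tendsto (fun x => (g (u x) - g r) / v x) l (𝓝 (g' * c)) := by
  have hu : Tendsto u l (𝓝 r) := by
    have hsub : Tendsto (fun x => u x - r) l (𝓝 0) := by
      refine (mul_zero c ▸ huv.mul hv).congr' ?_
      filter_upwards [hv0] with x hx
      exact div_mul_cancel₀ _ hx
    simpa using hsub.add_const r
  have hO : (fun x => u x - r) =O[l] v :=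
    isBigO_of_div_tendsto_nhds (hv0.mono fun x hx h => absurd h hx) c huv
  have hlin : (fun x => g (u x) - g r - g' * (u x - r)) =o[l] v := by
    have := (hasDerivAt_iff_isLittleO.mp hg).comp_tendsto hu
    simpa only [Function.comp_def, smul_eq_mul, mul_comm] using this.trans_isBigO hO
  refine (add_zero (g' * c) ▸ (huv.const_mul g').add hlin.tendsto_div_nhds_zero).congr' ?_
  filter_upwards [hv0] with x hx
  field_simp
  ring

/-- near a simple root, the extended Newton-Raphson map satisfies
`(G_β(x) - r)/(x - r)² → (1 - β)·f''(r)/(2 f'(r))` as `x → r`, `x ≠ r`. -/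
theorem ext_newton_quadratic_limit (f : ℝ → ℝ) (hf : ContDiff ℝ 2 f)
    (r : ℝ) (hr : f r = 0) (hr' : deriv f r ≠ 0) (β : ℝ) :
    Filter.Tendsto (fun x => (extNewtonMap f β x - r) / (x - r) ^ 2)
      (nhdsWithin r {r}ᶜ)
      (nhds ((1 - β) * deriv (deriv f) r / (2 * deriv f r))) := by
  have hdf : Differentiable ℝ f := hf.differentiable two_ne_zero
  have hf1 : ContDiff ℝ 1 (deriv f) := (contDiff_succ_iff_deriv.mp (by exact_mod_cast hf)).2.2
  have hN := tendsto_newtonMap_sub_div_sq hdf (hf1.differentiable one_ne_zero)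
    (hf1.continuous_deriv le_rfl).continuousAt hr hr'
  have hfN := (hdf r).hasDerivAt.tendsto_comp_sub_div (tendsto_sub_sq_nhdsNE r)
    (eventually_sub_sq_ne_zero_nhdsNE r) hN
  have hinv : Tendsto (fun x => (deriv f x)⁻¹) (𝓝[≠] r) (𝓝 (deriv f r)⁻¹) :=
    tendsto_nhdsWithin_of_tendsto_nhds (hf1.continuous.continuousAt.inv₀ hr')
  convert hN.sub ((hfN.mul hinv).const_mul β) using 2
  · simp only [extNewtonMap, hr]
    ring
  · field_simp
end

section
/- Let f : ℝ → ℝ be three times continuously differentiable, and let r ∈ ℝ with f(r) = 0 and f'(r) ≠ 0. Then the extended Newton-Raphson map with β = 1 converges with at least cubic order: there exist constants C > 0 and δ > 0 such that for all x with |x - r| < δ, one has |G₁(x) - r| ≤ C·|x - r|³. -/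
open Set Metric Filter Topology
open scoped NNReal

theorem abs_sub_sub_mul_le_of_lipschitzOnWith {f f' : ℝ → ℝ} {s : Set ℝ} {K : ℝ≥0}
    (hs : Convex ℝ s) (hf : ∀ t ∈ s, HasDerivAt f (f' t) t) (hf' : LipschitzOnWith K f' s)
    {x a b : ℝ} (hx : x ∈ s) (ha : a ∈ s) (hb : b ∈ s) :
    |f b - f a - f' x * (b - a)| ≤ K * (|a - x| + |b - a|) * |b - a| := by
  have hsub : uIcc a b ⊆ s := hs.ordConnected.uIcc_subset ha hb
  have hderiv : ∀ t ∈ uIcc a b,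
      HasDerivWithinAt (fun t => f t - f' x * t) (f' t - f' x) (uIcc a b) t := fun t ht =>
    ((hf t (hsub ht)).sub ((hasDerivAt_id t).const_mul (f' x))).hasDerivWithinAt.congr_deriv
      (by ring)
  have hbound : ∀ t ∈ uIcc a b, ‖f' t - f' x‖ ≤ K * (|a - x| + |b - a|) := fun t ht =>
    calc ‖f' t - f' x‖ = dist (f' t) (f' x) := (dist_eq_norm _ _).symm
      _ ≤ K * dist t x := hf'.dist_le_mul t (hsub ht) x hx
      _ ≤ K * (|a - x| + |b - a|) := by
        gcongr
        calc dist t x ≤ |t - a| + |a - x| := abs_sub_le t a x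
          _ ≤ |a - x| + |b - a| := by linarith [abs_sub_left_of_mem_uIcc ht]
  have := (convex_uIcc a b).norm_image_sub_le_of_norm_hasDerivWithin_le hderiv hbound
    left_mem_uIcc right_mem_uIcc
  simp only [Real.norm_eq_abs] at this
  calc |f b - f a - f' x * (b - a)| = |f b - f' x * b - (f a - f' x * a)| := by ring_nf
    _ ≤ _ := this

section NewtonError

variable {f : ℝ → ℝ} {s : Set ℝ} {K : ℝ≥0} {r x : ℝ}

theorem abs_newtonMap_sub_mul_le (hs : Convex ℝ s) (hf : ∀ t ∈ s, DifferentiableAt ℝ f t)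
    (hf' : LipschitzOnWith K (deriv f) s) (hr : f r = 0) (hrs : r ∈ s) (hxs : x ∈ s) :
    |newtonMap f x - r| * |deriv f x| ≤ K * |x - r| ^ 2 := by
  by_cases hd : deriv f x = 0
  · rw [hd, abs_zero, mul_zero]
    positivity
  have hN : (newtonMap f x - r) * deriv f x = f r - f x - deriv f x * (r - x) := by
    rw [newtonMap, hr]
    field_simp
    ring
  have := abs_sub_sub_mul_le_of_lipschitzOnWith hs (fun t ht => (hf t ht).hasDerivAt) hf'
    hxs hxs hrs
  rw [sub_self, abs_zero, zero_add, abs_sub_comm r x] at this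
  rw [← abs_mul, hN]
  linarith

theorem abs_extNewtonMap_one_sub_mul_le (hs : Convex ℝ s)
    (hf : ∀ t ∈ s, DifferentiableAt ℝ f t) (hf' : LipschitzOnWith K (deriv f) s) (hr : f r = 0)
    (hrs : r ∈ s) (hxs : x ∈ s) (hNs : newtonMap f x ∈ s) :
    |extNewtonMap f 1 x - r| * |deriv f x| ≤
      K * (|x - r| + |newtonMap f x - r|) * |newtonMap f x - r| := by
  by_cases hd : deriv f x = 0
  · rw [hd, abs_zero, mul_zero]
    positivity
  have hG : (extNewtonMap f 1 x - r) * deriv f x =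
      -(f (newtonMap f x) - f r - deriv f x * (newtonMap f x - r)) := by
    rw [extNewtonMap, hr]
    field_simp
    ring
  have := abs_sub_sub_mul_le_of_lipschitzOnWith hs (fun t ht => (hf t ht).hasDerivAt) hf'
    hxs hrs hNs
  rw [← abs_mul, hG, abs_neg]
  rwa [abs_sub_comm r x] at this

/-- The condition `K |x - r| ≤ m` is what keeps `N(x)` inside the ball. -/
theorem abs_extNewtonMap_one_sub_le {ρ m : ℝ} (hf : ∀ t ∈ ball r ρ, DifferentiableAt ℝ f t)
    (hf' : LipschitzOnWith K (deriv f) (ball r ρ)) (hr : f r = 0) (hm : 0 < m)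
    (hx : x ∈ ball r ρ) (hmx : m ≤ |deriv f x|) (hKx : K * |x - r| ≤ m) :
    |extNewtonMap f 1 x - r| ≤ 2 * (K / m) ^ 2 * |x - r| ^ 3 := by
  have hrs : r ∈ ball r ρ := mem_ball_self (pos_of_mem_ball hx)
  set N := newtonMap f x
  have hN : |N - r| * m ≤ K * |x - r| ^ 2 :=
    (mul_le_mul_of_nonneg_left hmx (abs_nonneg _)).trans
      (abs_newtonMap_sub_mul_le (convex_ball r ρ) hf hf' hr hrs hx)
  have hNx : |N - r| ≤ |x - r| := by nlinarith [abs_nonneg (x - r)]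
  have hNs : N ∈ ball r ρ := by
    rw [mem_ball, Real.dist_eq] at hx ⊢
    exact hNx.trans_lt hx
  have hG := abs_extNewtonMap_one_sub_mul_le (convex_ball r ρ) hf hf' hr hrs hx hNs
  have hGm : |extNewtonMap f 1 x - r| * m ^ 2 ≤ 2 * K ^ 2 * |x - r| ^ 3 := by
    have hG' : |extNewtonMap f 1 x - r| * m ≤ K * (2 * |x - r|) * |N - r| := by
      refine ((mul_le_mul_of_nonneg_left hmx (abs_nonneg _)).trans hG).trans ?_
      gcongr
      linarith
    calc |extNewtonMap f 1 x - r| * m ^ 2 = (|extNewtonMap f 1 x - r| * m) * m := by ring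
      _ ≤ K * (2 * |x - r|) * |N - r| * m := by gcongr
      _ = 2 * K * |x - r| * (|N - r| * m) := by ring
      _ ≤ 2 * K * |x - r| * (K * |x - r| ^ 2) := by gcongr
      _ = 2 * K ^ 2 * |x - r| ^ 3 := by ring
  rw [div_pow, mul_div_assoc', div_mul_eq_mul_div, le_div_iff₀ (by positivity)]
  linarith

end NewtonError

/-- for `f` three times continuously differentiable with a simple
root `r`, the extended Newton-Raphson map with `β = 1` converges with at least
cubic order near `r`. -/
theorem ext_newton_cubic (f : ℝ → ℝ) (hf : ContDiff ℝ 3 f)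
    (r : ℝ) (hr : f r = 0) (hr' : deriv f r ≠ 0) :
    ∃ C > 0, ∃ δ > 0, ∀ x : ℝ, |x - r| < δ →
      |extNewtonMap f 1 x - r| ≤ C * |x - r| ^ 3 := by
  have hdf : ContDiff ℝ 2 (deriv f) := hf.deriv'
  obtain ⟨K, t, ht, hK⟩ := (hdf.contDiffAt (x := r)).of_le one_le_two |>.exists_lipschitzOnWith
  set m := |deriv f r| / 2
  have hm : 0 < m := half_pos (abs_pos.2 hr')
  have hlow : ∀ᶠ y in 𝓝 r, m < |deriv f y| :=
    hdf.continuous.abs.continuousAt.eventually (lt_mem_nhds (half_lt_self (abs_pos.2 hr')))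
  obtain ⟨ρ, hρ, hball⟩ := Metric.mem_nhds_iff.1 (inter_mem ht hlow)
  refine ⟨2 * (((K + 1 : ℝ≥0) : ℝ) / m) ^ 2, by positivity, min ρ (m / (K + 1)), by positivity,
    fun x hx => ?_⟩
  have hxρ : x ∈ ball r ρ := by
    rw [mem_ball, Real.dist_eq]
    exact hx.trans_le (min_le_left _ _)
  refine abs_extNewtonMap_one_sub_le (fun y _ => (hf.differentiable (by norm_num)) y)
    ((hK.mono fun y hy => (hball hy).1).weaken le_self_add) hr hm hxρ (hball hxρ).2.le ?_
  have := hx.trans_le (min_le_right _ _)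
  rw [lt_div_iff₀ (by positivity)] at this
  push_cast
  linarith
end

section
/- Let f : ℝ → ℝ be continuous with f(x) = 0 if and only if x = x_r, and suppose that for every δ > 0 there exists ε > 0 such that |f(x)| ≥ ε whenever |x - x_r| ≥ δ. Assume that for every g > 0 the function x ↦ exp(-f(x)²/(2g²)) is integrable on ℝ. Let h : ℝ → ℝ be continuous and bounded. Then lim_{g → 0⁺} (∫ h(x)·exp(-f(x)²/(2g²)) dx) / (∫ exp(-f(x)²/(2g²)) dx) = h(x_r). -/
/-!
Write `w_τ = exp (-V / τ)` with `V = f²` and `τ = 2 g²`. By continuity `V ≤ V x₀ + ε / 2` on a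
ball of positive measure, so `∫ w_τ ≳ exp (-(V x₀ + ε / 2) / τ)`, while away from `x₀` the
separation hypothesis gives `V ≥ V x₀ + ε` and hence a mass `≲ exp (-(V x₀ + ε) / τ)`. The
normalized weights therefore put a vanishing fraction of their mass outside every ball around
`x₀`, and averaging a bounded function continuous at `x₀` against them tends to its value there.
-/

open MeasureTheory Filter Metric Real Topology

section Concentration

variable {α : Type*} [MeasurableSpace α] {μ : Measure α}

lemma abs_integral_mul_sub_mul_integral_le {w h : α → ℝ} {s : Set α} {a b c : ℝ}
    (hs : MeasurableSet s) (hw : ∀ x, 0 ≤ w x) (hwi : Integrable w μ)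
    (hh : AEStronglyMeasurable h μ) (ha : ∀ x ∈ s, |h x - c| ≤ a) (hb : ∀ x, |h x - c| ≤ b) :
    |∫ x, h x * w x ∂μ - c * ∫ x, w x ∂μ| ≤
      a * ∫ x in s, w x ∂μ + b * ∫ x in sᶜ, w x ∂μ := by
  have hdev : Integrable (fun x => |h x - c| * w x) μ :=
    hwi.bdd_mul (continuous_abs.comp_aestronglyMeasurable (hh.sub aestronglyMeasurable_const))
      (ae_of_all _ fun x => by simpa only [Real.norm_eq_abs, abs_abs] using hb x)
  have hhw : Integrable (fun x => h x * w x) μ :=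
    hwi.bdd_mul (c := b + |c|) hh (ae_of_all _ fun x => by
      rw [Real.norm_eq_abs]; linarith [abs_sub_abs_le_abs_sub (h x) c, hb x])
  calc |∫ x, h x * w x ∂μ - c * ∫ x, w x ∂μ|
      = |∫ x, (h x - c) * w x ∂μ| := by
        simp_rw [sub_mul]
        rw [integral_sub hhw (hwi.const_mul c), integral_const_mul]
    _ ≤ ∫ x, |h x - c| * w x ∂μ := by
        refine abs_integral_le_integral_abs.trans_eq ?_
        simp_rw [abs_mul, abs_of_nonneg (hw _)]
    _ = (∫ x in s, |h x - c| * w x ∂μ) + ∫ x in sᶜ, |h x - c| * w x ∂μ :=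
        (integral_add_compl hs hdev).symm
    _ ≤ (∫ x in s, a * w x ∂μ) + ∫ x in sᶜ, b * w x ∂μ := by
        refine add_le_add ?_ ?_
        · exact setIntegral_mono_on hdev.integrableOn (hwi.const_mul a).integrableOn hs
            fun x hx => mul_le_mul_of_nonneg_right (ha x hx) (hw x)
        · exact setIntegral_mono hdev.integrableOn (hwi.const_mul b).integrableOn
            fun x => mul_le_mul_of_nonneg_right (hb x) (hw x)
    _ = a * (∫ x in s, w x ∂μ) + b * ∫ x in sᶜ, w x ∂μ := by
        rw [integral_const_mul, integral_const_mul]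

theorem tendsto_integral_mul_div_integral_of_tendsto_tail {ι : Type*} [PseudoMetricSpace α]
    [OpensMeasurableSpace α] {l : Filter ι} {w : ι → α → ℝ} {x₀ : α} {h : α → ℝ} {M : ℝ}
    (hw : ∀ i x, 0 ≤ w i x) (hZ : ∀ᶠ i in l, 0 < ∫ x, w i x ∂μ)
    (htail : ∀ δ > 0,
      Tendsto (fun i => (∫ x in (ball x₀ δ)ᶜ, w i x ∂μ) / ∫ x, w i x ∂μ) l (𝓝 0))
    (hh : AEStronglyMeasurable h μ) (hx₀ : ContinuousAt h x₀) (hM : ∀ x, |h x| ≤ M) :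
    Tendsto (fun i => (∫ x, h x * w i x ∂μ) / ∫ x, w i x ∂μ) l (𝓝 (h x₀)) := by
  rw [Metric.tendsto_nhds]
  intro η hη
  obtain ⟨δ, hδ, hnear⟩ := Metric.continuousAt_iff.mp hx₀ (η / 4) (by positivity)
  have hM0 : 0 ≤ M := (abs_nonneg _).trans (hM x₀)
  have hfar : ∀ x, |h x - h x₀| ≤ 2 * M := fun x =>
    (abs_sub _ _).trans (by linarith [hM x, hM x₀])
  have hsmall : 2 * M * (η / (4 * M + 1)) ≤ η / 2 := by
    rw [mul_div_assoc', div_le_div_iff₀ (by positivity) two_pos]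
    nlinarith
  filter_upwards [hZ, (htail δ hδ).eventually (gt_mem_nhds (by positivity : 0 < η / (4 * M + 1)))]
    with i hZi htaili
  set Z := ∫ x, w i x ∂μ
  have hwi : Integrable (w i) μ := Integrable.of_integral_ne_zero hZi.ne'
  have hdev := abs_integral_mul_sub_mul_integral_le measurableSet_ball (hw i) hwi hh
    (fun x hx => (hnear hx).le) hfar
  have hball : ∫ x in ball x₀ δ, w i x ∂μ ≤ Z := setIntegral_le_integral hwi (ae_of_all _ (hw i))
  rw [div_lt_iff₀ hZi] at htaili
  rw [Real.dist_eq, show (∫ x, h x * w i x ∂μ) / Z - h x₀ = (∫ x, h x * w i x ∂μ - h x₀ * Z) / Z by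
    field_simp, abs_div, abs_of_pos hZi, div_lt_iff₀ hZi]
  calc _ ≤ _ := hdev
    _ ≤ η / 4 * Z + 2 * M * (η / (4 * M + 1) * Z) := by gcongr
    _ ≤ η / 4 * Z + η / 2 * Z := by rw [← mul_assoc]; gcongr
    _ < η * Z := by linarith [mul_pos hη hZi]

end Concentration

section Laplace

variable {α : Type*} [MeasurableSpace α] {μ : Measure α} {V : α → ℝ}

lemma measureReal_mul_exp_le_integral_exp_neg_div {t : Set α} {a τ : ℝ} (ht : MeasurableSet t)
    (ht_top : μ t ≠ ⊤) (hVt : ∀ x ∈ t, V x ≤ a) (hτ : 0 < τ)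
    (hint : Integrable (fun x => exp (-V x / τ)) μ) :
    μ.real t * exp (-a / τ) ≤ ∫ x, exp (-V x / τ) ∂μ :=
  calc μ.real t * exp (-a / τ) = ∫ _ in t, exp (-a / τ) ∂μ := by
        rw [setIntegral_const, smul_eq_mul]
    _ ≤ ∫ x in t, exp (-V x / τ) ∂μ :=
        setIntegral_mono_on (integrableOn_const ht_top) hint.integrableOn ht fun x hx =>
          exp_le_exp.mpr (div_le_div_of_nonneg_right (neg_le_neg (hVt x hx)) hτ.le)
    _ ≤ ∫ x, exp (-V x / τ) ∂μ := setIntegral_le_integral hint (ae_of_all _ fun _ => (exp_pos _).le)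

lemma setIntegral_exp_neg_div_le {s : Set α} {b τ τ₀ : ℝ} (hs : MeasurableSet s)
    (hVs : ∀ x ∈ s, b ≤ V x) (hτ : 0 < τ) (hττ₀ : τ ≤ τ₀)
    (hint : Integrable (fun x => exp (-V x / τ₀)) μ) :
    ∫ x in s, exp (-V x / τ) ∂μ ≤ exp (-b * (1 / τ - 1 / τ₀)) * ∫ x, exp (-V x / τ₀) ∂μ := by
  have hinv : 1 / τ₀ ≤ 1 / τ := one_div_le_one_div_of_le hτ hττ₀
  calc ∫ x in s, exp (-V x / τ) ∂μ
      ≤ ∫ x in s, exp (-b * (1 / τ - 1 / τ₀)) * exp (-V x / τ₀) ∂μ := by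
        refine integral_mono_of_nonneg (ae_of_all _ fun _ => (exp_pos _).le)
          (hint.const_mul _).integrableOn ((ae_restrict_iff' hs).mpr (ae_of_all _ fun x hx => ?_))
        dsimp only
        rw [← exp_add, exp_le_exp]
        have hgap : 0 ≤ (V x - b) * (1 / τ - 1 / τ₀) :=
          mul_nonneg (sub_nonneg.mpr (hVs x hx)) (sub_nonneg.mpr hinv)
        linarith [show -V x / τ = -b * (1 / τ - 1 / τ₀) + -V x / τ₀ - (V x - b) * (1 / τ - 1 / τ₀)
          by ring]
    _ ≤ ∫ x, exp (-b * (1 / τ - 1 / τ₀)) * exp (-V x / τ₀) ∂μ :=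
        setIntegral_le_integral (hint.const_mul _) (ae_of_all _ fun _ => by positivity)
    _ = exp (-b * (1 / τ - 1 / τ₀)) * ∫ x, exp (-V x / τ₀) ∂μ := integral_const_mul _ _

lemma tendsto_setIntegral_exp_neg_div_div_integral {s t : Set α} {a b : ℝ}
    (hs : MeasurableSet s) (ht : MeasurableSet t) (ht0 : μ t ≠ 0) (ht_top : μ t ≠ ⊤) (hab : a < b)
    (hVt : ∀ x ∈ t, V x ≤ a) (hVs : ∀ x ∈ s, b ≤ V x)
    (hint : ∀ τ > 0, Integrable (fun x => exp (-V x / τ)) μ) :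
    Tendsto (fun τ => (∫ x in s, exp (-V x / τ) ∂μ) / ∫ x, exp (-V x / τ) ∂μ)
      (𝓝[>] 0) (𝓝 0) := by
  set C := exp b * (∫ x, exp (-V x / 1) ∂μ) / μ.real t with hC
  have hm : 0 < μ.real t := ENNReal.toReal_pos ht0 ht_top
  have hdecay : Tendsto (fun τ : ℝ => C * exp (-((b - a) * τ⁻¹))) (𝓝[>] 0) (𝓝 0) := by
    simpa only [mul_zero, Function.comp_def] using ((tendsto_exp_atBot.comp
      (tendsto_neg_atTop_atBot.comp
        (tendsto_inv_nhdsGT_zero.const_mul_atTop (sub_pos.mpr hab)))).const_mul C)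
  refine tendsto_of_tendsto_of_tendsto_of_le_of_le' tendsto_const_nhds hdecay
    (Eventually.of_forall fun τ => div_nonneg (setIntegral_nonneg hs fun _ _ => (exp_pos _).le)
      (integral_nonneg fun _ => (exp_pos _).le)) ?_
  filter_upwards [Ioo_mem_nhdsGT one_pos] with τ ⟨hτ, hτ1⟩
  calc (∫ x in s, exp (-V x / τ) ∂μ) / ∫ x, exp (-V x / τ) ∂μ
      ≤ (exp (-b * (1 / τ - 1 / 1)) * ∫ x, exp (-V x / 1) ∂μ) / (μ.real t * exp (-a / τ)) :=
        div_le_div₀ (by positivity) (setIntegral_exp_neg_div_le hs hVs hτ hτ1.le (hint 1 one_pos))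
          (by positivity) (measureReal_mul_exp_le_integral_exp_neg_div ht ht_top hVt hτ (hint τ hτ))
    _ = C * exp (-((b - a) * τ⁻¹)) := by
        rw [show -b * (1 / τ - 1 / 1) = b + -((b - a) * τ⁻¹) + -a / τ by ring, exp_add, exp_add,
          hC]
        field_simp

theorem tendsto_integral_mul_exp_neg_div_div_integral [PseudoMetricSpace α] [ProperSpace α]
    [BorelSpace α] [IsFiniteMeasureOnCompacts μ] [μ.IsOpenPosMeasure] {h : α → ℝ} {x₀ : α} {M : ℝ}
    (hV : ContinuousAt V x₀) (hsep : ∀ δ > 0, ∃ ε > 0, ∀ x, δ ≤ dist x x₀ → V x₀ + ε ≤ V x)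
    (hint : ∀ τ > 0, Integrable (fun x => exp (-V x / τ)) μ)
    (hh : AEStronglyMeasurable h μ) (hx₀ : ContinuousAt h x₀) (hM : ∀ x, |h x| ≤ M) :
    Tendsto (fun τ => (∫ x, h x * exp (-V x / τ) ∂μ) / ∫ x, exp (-V x / τ) ∂μ)
      (𝓝[>] 0) (𝓝 (h x₀)) := by
  have : NeZero μ := ⟨fun h0 => (Metric.measure_ball_pos μ x₀ one_pos).ne' (by simp [h0])⟩
  refine tendsto_integral_mul_div_integral_of_tendsto_tail (w := fun τ x => exp (-V x / τ))
    (fun _ _ => (exp_pos _).le) ?_ (fun δ hδ => ?_) hh hx₀ hM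
  · filter_upwards [self_mem_nhdsWithin] with τ hτ using integral_exp_pos (hint τ hτ)
  obtain ⟨ε, hε, hfar⟩ := hsep δ hδ
  obtain ⟨r, hr, hnear⟩ := Metric.continuousAt_iff.mp hV (ε / 2) (half_pos hε)
  refine tendsto_setIntegral_exp_neg_div_div_integral (a := V x₀ + ε / 2) (b := V x₀ + ε)
    measurableSet_ball.compl measurableSet_ball (measure_ball_pos μ x₀ hr).ne'
    measure_ball_lt_top.ne (by linarith) (fun x hx => ?_) (fun x hx => hfar x (not_lt.mp hx)) hint
  linarith [(abs_lt.mp (hnear hx)).2]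

end Laplace

/-- Laplace concentration of the root-finding partition function:
as `g ↓ 0`, the expectation `⟨h⟩ = Z(g)⁻¹·∫ h(x)·exp(-f(x)²/(2g²)) dx`
converges to `h(x_r)`, the value of `h` at the unique root of `f`. -/
theorem laplace_concentration (f : ℝ → ℝ) (hf : Continuous f) (xr : ℝ)
    (hroot : ∀ x, f x = 0 ↔ x = xr)
    (hsep : ∀ δ > 0, ∃ ε > 0, ∀ x, δ ≤ |x - xr| → ε ≤ |f x|)
    (hint : ∀ g > 0,
      Integrable (fun x : ℝ => Real.exp (-(f x) ^ 2 / (2 * g ^ 2))))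
    (h : ℝ → ℝ) (hh : Continuous h) (M : ℝ) (hM : ∀ x, |h x| ≤ M) :
    Filter.Tendsto
      (fun g : ℝ =>
        (∫ x : ℝ, h x * Real.exp (-(f x) ^ 2 / (2 * g ^ 2))) /
          (∫ x : ℝ, Real.exp (-(f x) ^ 2 / (2 * g ^ 2))))
      (nhdsWithin 0 (Set.Ioi 0)) (nhds (h xr)) := by
  have hf0 : f xr = 0 := (hroot xr).mpr rfl
  have hsep_sq : ∀ δ > 0, ∃ ε > 0, ∀ x, δ ≤ dist x xr → f xr ^ 2 + ε ≤ f x ^ 2 := by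
    intro δ hδ
    obtain ⟨ε, hε, hfar⟩ := hsep δ hδ
    refine ⟨ε ^ 2, by positivity, fun x hx => ?_⟩
    rw [hf0, zero_pow two_ne_zero, zero_add, ← sq_abs (f x)]
    exact pow_le_pow_left₀ hε.le (hfar x hx) 2
  have hint_τ : ∀ τ > 0, Integrable (fun x => exp (-(f x ^ 2) / τ)) := by
    intro τ hτ
    simpa only [sq_sqrt (half_pos hτ).le, mul_div_cancel₀ τ two_ne_zero]
      using hint √(τ / 2) (sqrt_pos.mpr (half_pos hτ))
  have hτ : Tendsto (fun g : ℝ => 2 * g ^ 2) (𝓝[>] 0) (𝓝[>] 0) :=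
    tendsto_nhdsWithin_iff.mpr
      ⟨((show Continuous fun g : ℝ => 2 * g ^ 2 by fun_prop).tendsto' 0 0 (by simp)).mono_left
          nhdsWithin_le_nhds,
        eventually_nhdsWithin_of_forall fun g hg =>
          Set.mem_Ioi.mpr (mul_pos two_pos (pow_pos hg 2))⟩
  exact (tendsto_integral_mul_exp_neg_div_div_integral (hf.pow 2).continuousAt hsep_sq hint_τ
    hh.aestronglyMeasurable hh.continuousAt hM).comp hτ
end

section
/- Let f : ℝ → ℝ be three times continuously differentiable, and let r ∈ ℝ with f(r) = 0, f'(r) ≠ 0, and f''(r) = 0. Then the Newton map N(x) = x - f(x)/f'(x) converges with at least cubic order at r: there exist constants C > 0 and δ > 0 such that for all x with |x - r| < δ, one has |N(x) - r| ≤ C·|x - r|³. -/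
open Filter Topology Asymptotics

theorem isBigO_pow_succ_of_deriv_isBigO_pow {E : Type*} [NormedAddCommGroup E] [NormedSpace ℝ E]
    {g : ℝ → E} {a : ℝ} {n : ℕ} (hdg : ∀ᶠ x in 𝓝 a, DifferentiableAt ℝ g x)
    (hderiv : deriv g =O[𝓝 a] (fun x => (x - a) ^ n)) (hg₀ : g a = 0) :
    g =O[𝓝 a] (fun x => (x - a) ^ (n + 1)) := by
  have hfderiv : fderiv ℝ g =O[𝓝 a] (‖· - a‖ ^ (n : ℝ)) := by
    refine isBigO_norm_norm.mp (hderiv.norm_norm.congr (fun x => ?_) (fun x => ?_))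
    · exact norm_deriv_eq_norm_fderiv
    · simp [Real.rpow_natCast]
  refine isBigO_norm_right.mp <|
    (isBigO_norm_rpow_add_one_of_fderiv_of_apply_eq_zero n.cast_nonneg hdg hfderiv hg₀).congr_right
      fun x => ?_
  rw [norm_pow, ← Real.rpow_natCast]
  push_cast
  rfl

theorem exists_pos_bound_of_isBigO_nhds {α E F : Type*} [PseudoMetricSpace α]
    [NormedAddCommGroup E] [NormedAddCommGroup F] {u : α → E} {v : α → F} {a : α}
    (h : u =O[𝓝 a] v) : ∃ C > 0, ∃ δ > 0, ∀ x, dist x a < δ → ‖u x‖ ≤ C * ‖v x‖ := by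
  obtain ⟨C, hC, hCuv⟩ := h.exists_pos
  obtain ⟨δ, hδ, hδuv⟩ := Metric.eventually_nhds_iff.mp hCuv.bound
  exact ⟨C, hC, δ, hδ, hδuv⟩

theorem newtonMap_sub_eq_div {f : ℝ → ℝ} {x : ℝ} (hx : deriv f x ≠ 0) (r : ℝ) :
    newtonMap f x - r = (deriv f x * (x - r) - f x) / deriv f x := by
  rw [newtonMap]
  field_simp
  ring

theorem hasDerivAt_deriv_mul_sub_sub {f : ℝ → ℝ} {t : ℝ} (hf : DifferentiableAt ℝ f t)
    (hf' : DifferentiableAt ℝ (deriv f) t) (r : ℝ) :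
    HasDerivAt (fun t => deriv f t * (t - r) - f t) (deriv (deriv f) t * (t - r)) t :=
  ((hf'.hasDerivAt.mul ((hasDerivAt_id' t).sub_const r)).sub hf.hasDerivAt).congr_deriv
    (by ring)

/-- at a simple root where `f''(r) = 0`, the Newton map converges
with at least cubic order. -/
theorem newton_cubic_of_vanishing_curvature (f : ℝ → ℝ) (hf : ContDiff ℝ 3 f)
    (r : ℝ) (hr : f r = 0) (hr' : deriv f r ≠ 0)
    (hr'' : deriv (deriv f) r = 0) :
    ∃ C > 0, ∃ δ > 0, ∀ x : ℝ, |x - r| < δ →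
      |newtonMap f x - r| ≤ C * |x - r| ^ 3 := by
  have hf₁ : Differentiable ℝ f := hf.differentiable (by norm_num)
  have hf₂ : ContDiff ℝ 2 (deriv f) := hf.deriv'
  have hf₃ : Differentiable ℝ (deriv (deriv f)) := hf₂.deriv'.differentiable one_ne_zero
  set g : ℝ → ℝ := fun t => deriv f t * (t - r) - f t
  have hg : ∀ t, HasDerivAt g (deriv (deriv f) t * (t - r)) t := fun t =>
    hasDerivAt_deriv_mul_sub_sub (hf₁ t) (hf₂.differentiable (by norm_num) t) r
  have hf'' : deriv (deriv f) =O[𝓝 r] (· - r) := by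
    simpa [hr''] using (hf₃ r).hasDerivAt.isBigO_sub
  have hg' : deriv g =O[𝓝 r] (fun x => (x - r) ^ 2) := by
    simpa [funext fun t => (hg t).deriv, sq] using hf''.mul (isBigO_refl (· - r) _)
  have hg₃ : g =O[𝓝 r] (fun x => (x - r) ^ 3) :=
    isBigO_pow_succ_of_deriv_isBigO_pow (.of_forall fun t => (hg t).differentiableAt) hg'
      (by simp [g, hr])
  have hcont : ContinuousAt (deriv f) r := hf₂.continuous.continuousAt
  have hinv : (fun x => (deriv f x)⁻¹) =O[𝓝 r] (fun _ => (1 : ℝ)) :=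
    (hcont.tendsto.inv₀ hr').isBigO_one ℝ
  have hN : (fun x => g x * (deriv f x)⁻¹) =ᶠ[𝓝 r] (fun x => newtonMap f x - r) :=
    (hcont.eventually_ne hr').mono fun x hx => (newtonMap_sub_eq_div hx r).symm
  obtain ⟨C, hC, δ, hδ, hCδ⟩ :=
    exists_pos_bound_of_isBigO_nhds ((hg₃.mul hinv).congr' hN (.of_forall fun x => mul_one _))
  exact ⟨C, hC, δ, hδ, fun x hx => by simpa [abs_pow] using hCδ x (by rwa [Real.dist_eq])⟩
end
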